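/- arXiv:1309.2340 — 3 statements merged into one kernel-verified Lean document; each statement's English description precedes it below -/
import Mathlib

section
/- Let n ≥ 2 be an integer, let V ⊆ ℤ^d be translation respecting of type 0, let Δ be a minimal translation of V (i.e. Δ ∈ nℤ^d with V ⊊ V + Δ and no member of T_V lies strictly between V and V + Δ), and let ℓ ∈ ℤ satisfy V + ℓ·Δ = V + n·e_1. Then the number of ordered pairs (w0, w1) of vertices of (ℤ/nℤ)^d such that w0 − w1 = π(e_1) and some edge (x0, x1) ∈ ∂V satisfies π(x0) = w0, π(x1) = w1, is at least ℓ·n^{d−1}. -/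
namespace P3C

def latticeGraph (d : ℕ) : SimpleGraph (Fin d → ℤ) where
  Adj v w := ∃ i, (w i = v i + 1 ∨ w i = v i - 1) ∧ ∀ j, j ≠ i → w j = v j
  symm := by
    constructor
    rintro v w ⟨i, h1, h2⟩
    exact ⟨i, by omega, fun j hj => (h2 j hj).symm⟩
  loopless := by
    constructor
    rintro v ⟨i, h1, _⟩
    omega

def vplus (d : ℕ) (U : Set (Fin d → ℤ)) : Set (Fin d → ℤ) :=
  {u | u ∈ U ∨ ∃ w ∈ U, (latticeGraph d).Adj u w}

def vminus (d : ℕ) (U : Set (Fin d → ℤ)) : Set (Fin d → ℤ) :=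
  {u | u ∈ U ∧ ∀ w, (latticeGraph d).Adj u w → w ∈ U}

def inBdry (d : ℕ) (U : Set (Fin d → ℤ)) : Set (Fin d → ℤ) := U \ vminus d U

def outBdry (d : ℕ) (U : Set (Fin d → ℤ)) : Set (Fin d → ℤ) := vplus d U \ U

def ConnectedIn {V : Type*} (G : SimpleGraph V) (S : Set V) : Prop := (G.induce S).Connected

def BiConnected (d : ℕ) (U : Set (Fin d → ℤ)) : Prop :=
  U ≠ ∅ ∧ U ≠ Set.univ ∧ ConnectedIn (latticeGraph d) U ∧ ConnectedIn (latticeGraph d) Uᶜ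

def edgeBdry (d : ℕ) (U : Set (Fin d → ℤ)) : Set ((Fin d → ℤ) × (Fin d → ℤ)) :=
  {p | (latticeGraph d).Adj p.1 p.2 ∧ ((p.1 ∈ U ∧ p.2 ∉ U) ∨ (p.2 ∈ U ∧ p.1 ∉ U))}

def IsFourCycle (d : ℕ) (v00 v01 v11 v10 : Fin d → ℤ) : Prop :=
  (latticeGraph d).Adj v00 v01 ∧ (latticeGraph d).Adj v01 v11 ∧
  (latticeGraph d).Adj v11 v10 ∧ (latticeGraph d).Adj v10 v00 ∧ v00 ≠ v11 ∧ v01 ≠ v10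

def BoundaryDisjoint (d : ℕ) (U1 U2 : Set (Fin d → ℤ)) : Prop :=
  edgeBdry d U1 ∩ edgeBdry d U2 = ∅ ∧
  ¬ ∃ v00 v01 v11 v10, IsFourCycle d v00 v01 v11 v10 ∧
    v00 ∈ U1ᶜ ∩ U2ᶜ ∧ v01 ∈ U1ᶜ ∩ U2 ∧ v11 ∈ U1 ∩ U2 ∧ v10 ∈ U1 ∩ U2ᶜ

def translates (n d : ℕ) (U : Set (Fin d → ℤ)) : Set (Set (Fin d → ℤ)) :=
  {W | ∃ x : Fin d → ℤ, (∀ i, (n : ℤ) ∣ x i) ∧ W = (fun u => u + x) '' U}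

def TranslationRespecting (n d : ℕ) (U : Set (Fin d → ℤ)) : Prop :=
  BiConnected d U ∧
  ∀ U1 ∈ translates n d U, ∀ U2 ∈ translates n d U, U1 ≠ U2 → BoundaryDisjoint d U1 U2

def TypeZero (n d : ℕ) (U : Set (Fin d → ℤ)) : Prop :=
  TranslationRespecting n d U ∧ (translates n d U).Nontrivial ∧
  ∀ A ∈ translates n d U, ∀ B ∈ translates n d U, A ⊆ B ∨ B ⊆ A

noncomputable def setDist (d : ℕ) (A B : Set (Fin d → ℤ)) : ℕ :=
  sInf {k | ∃ a ∈ A, ∃ b ∈ B, (latticeGraph d).dist a b = k}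

def IsLatticeHHF (d : ℕ) (h : (Fin d → ℤ) → ℤ) : Prop :=
  ∀ v w, (latticeGraph d).Adj v w → |h v - h w| = 1

def homZeroLattice (d : ℕ) : Set ((Fin d → ℤ) → ℤ) :=
  {h | IsLatticeHHF d h ∧ h 0 = 0}

def IsQP (n d : ℕ) (m : Fin d → ℤ) (h : (Fin d → ℤ) → ℤ) : Prop :=
  h ∈ homZeroLattice d ∧ ∀ (v : Fin d → ℤ) (i : Fin d), h (v + Pi.single i (n : ℤ)) = h v + m i

def QPset (n d : ℕ) : Set ((Fin d → ℤ) → ℤ) :=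
  {h | ∃ m : Fin d → ℤ, (∀ i, (6 : ℤ) ∣ m i ∧ |m i| ≤ (n : ℤ)) ∧ IsQP n d m h}

def compIn {V : Type*} (G : SimpleGraph V) (S : Set V) (u : V) : Set V :=
  {w | ∃ (hu : u ∈ S) (hw : w ∈ S), (G.induce S).Reachable ⟨u, hu⟩ ⟨w, hw⟩}

def subLL (d : ℕ) (h : (Fin d → ℤ) → ℤ) (k : ℤ) (u : Fin d → ℤ) : Set (Fin d → ℤ) :=
  compIn (latticeGraph d) {w | h w ≠ k + 1} u

def subLC (d : ℕ) (h : (Fin d → ℤ) → ℤ) (k : ℤ) (u v : Fin d → ℤ) : Set (Fin d → ℤ) :=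
  (compIn (latticeGraph d) (subLL d h k u)ᶜ v)ᶜ

def IsSublevelComponent (d : ℕ) (h : (Fin d → ℤ) → ℤ) (A : Set (Fin d → ℤ)) : Prop :=
  ∃ u v k, h u ≤ k ∧ k < h v ∧ A = subLC d h k u v

def sepComps (d : ℕ) (h : (Fin d → ℤ) → ℤ) (u v : Fin d → ℤ) : Set (Set (Fin d → ℤ)) :=
  {A | IsSublevelComponent d h A ∧ u ∈ A ∧ v ∉ A}

def cycleEdge (d : ℕ) (v00 v01 v11 v10 : Fin d → ℤ) (e : (Fin d → ℤ) × (Fin d → ℤ)) : Prop :=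
  ({e.1, e.2} : Set (Fin d → ℤ)) = {v00, v01} ∨ ({e.1, e.2} : Set (Fin d → ℤ)) = {v01, v11} ∨
  ({e.1, e.2} : Set (Fin d → ℤ)) = {v11, v10} ∨ ({e.1, e.2} : Set (Fin d → ℤ)) = {v10, v00}

def bdryGraph (d : ℕ) (U : Set (Fin d → ℤ)) : SimpleGraph (Fin d → ℤ) where
  Adj u v := u ≠ v ∧ ∃ eu ev, eu ∈ edgeBdry d U ∧ ev ∈ edgeBdry d U ∧
    (u = eu.1 ∨ u = eu.2) ∧ (v = ev.1 ∨ v = ev.2) ∧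
    ∃ a b c e, IsFourCycle d a b c e ∧ cycleEdge d a b c e eu ∧ cycleEdge d a b c e ev
  symm := by
    constructor
    rintro u v ⟨hne, eu, ev, h1, h2, h3, h4, a, b, c, e, hc, hcu, hcv⟩
    exact ⟨hne.symm, ev, eu, h2, h1, h4, h3, a, b, c, e, hc, hcv, hcu⟩
  loopless := ⟨fun u h => h.1 rfl⟩

/-! Torus definitions -/

def torusAdj (n d : ℕ) (v w : Fin d → ZMod n) : Prop :=
  ∃ i, (w i = v i + 1 ∨ w i = v i - 1) ∧ ∀ j, j ≠ i → w j = v j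

def IsProperColoring (n d : ℕ) (f : (Fin d → ZMod n) → Fin 3) : Prop :=
  ∀ v w, torusAdj n d v w → f v ≠ f w

def torusColorings (n d : ℕ) : Set ((Fin d → ZMod n) → Fin 3) :=
  {f | IsProperColoring n d f}

def colZero (n d : ℕ) : Set ((Fin d → ZMod n) → Fin 3) :=
  {f | IsProperColoring n d f ∧ f 0 = 0}

def IsTorusHHF (n d : ℕ) (h : (Fin d → ZMod n) → ℤ) : Prop :=
  ∀ v w, torusAdj n d v w → |h v - h w| = 1

def torusHomZero (n d : ℕ) : Set ((Fin d → ZMod n) → ℤ) :=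
  {h | IsTorusHHF n d h ∧ h 0 = 0}

noncomputable def cp (n d : ℕ) (par : ℕ) (k : Fin 3) (f : (Fin d → ZMod n) → Fin 3) : ℝ :=
  (Nat.card {v : Fin d → ZMod n | (∑ j, (v j).val) % 2 = par ∧ f v = k} : ℝ) /
  (Nat.card {v : Fin d → ZMod n | (∑ j, (v j).val) % 2 = par} : ℝ)

def latticeProj (n d : ℕ) (v : Fin d → ℤ) : Fin d → ZMod n := fun i => (v i : ZMod n)

def toCol (n d : ℕ) (h : (Fin d → ℤ) → ℤ) (x : Fin d → ZMod n) : Fin 3 :=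
  ⟨(h (fun i => ((x i).val : ℤ)) % 3).toNat, by
    have h1 : (0 : ℤ) ≤ h (fun i => ((x i).val : ℤ)) % 3 := Int.emod_nonneg _ (by norm_num)
    have h2 : h (fun i => ((x i).val : ℤ)) % 3 < 3 := Int.emod_lt_of_pos _ (by norm_num)
    omega⟩

end P3C


/-!
The translates `W j = V + jΔ` form a strictly increasing chain whose edge boundaries are pairwise
disjoint. On the connected lattice this makes the height `h x`, the least `j` with `x ∈ W j`,
well defined and `1`-Lipschitz along edges, and `V + ℓΔ = V + n e₁` gives `h (x + n e₁) = h x + ℓ`.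
So on each of the `n^{d-1}` lines of the torus in direction `e₁` the height jumps across at least
`ℓ` of the `n` edges, and each jump is a translate by some `jΔ ∈ nℤ^d` of an edge of `∂V`.
-/

open Finset

theorem SimpleGraph.Preconnected.induction_on {α : Type*} {G : SimpleGraph α}
    (hG : G.Preconnected) {P : α → Prop} (hP : ∀ ⦃x y⦄, G.Adj x y → P x → P y) {a : α}
    (ha : P a) (b : α) : P b := by
  obtain ⟨p⟩ := hG a b
  induction p with
  | nil => exact ha
  | cons hxy _ ih => exact ih (hP hxy ha)

namespace P3C

section TranslateChain

variable {A : Type*} [AddCommGroup A]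

def translateChain (V : Set A) (Δ : A) (j : ℤ) : Set A := (· + j • Δ) '' V

theorem translateChain_strictMono {V : Set A} {Δ : A} (hΔ : V ⊂ (· + Δ) '' V) :
    StrictMono (translateChain V Δ) := by
  refine strictMono_int_of_lt_succ fun j => ?_
  have h : translateChain V Δ (j + 1) = (· + j • Δ) '' ((· + Δ) '' V) := by
    rw [translateChain, Set.image_image, add_zsmul, one_zsmul]
    simp only [add_assoc, add_comm Δ]
  rw [h]
  exact (add_left_injective _).image_strictMono hΔ

theorem add_mem_translateChain_add_iff {V : Set A} {Δ N : A} {ℓ : ℤ}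
    (hℓ : (· + ℓ • Δ) '' V = (· + N) '' V) (j : ℤ) (x : A) :
    x + N ∈ translateChain V Δ (j + ℓ) ↔ x ∈ translateChain V Δ j := by
  have h : translateChain V Δ (j + ℓ) = (· + N) '' translateChain V Δ j := by
    have h' : translateChain V Δ (j + ℓ) = (· + j • Δ) '' ((· + ℓ • Δ) '' V) := by
      rw [translateChain, Set.image_image, add_zsmul]
      simp only [add_assoc, add_comm (ℓ • Δ)]
    rw [h', hℓ, translateChain, Set.image_image, Set.image_image]
    simp only [add_right_comm _ N]
  rw [h, (add_left_injective N).mem_set_image]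

end TranslateChain

section SublevelChain

variable {α : Type*} {G : SimpleGraph α} {W : ℤ → Set α}

structure IsSublevelChain (G : SimpleGraph α) (W : ℤ → Set α) : Prop where
  monotone : Monotone W
  eq_of_crosses : ∀ ⦃x y⦄, G.Adj x y → ∀ ⦃j k⦄, x ∈ W j → y ∉ W j → x ∈ W k → y ∉ W k → j = k
  exists_nonempty : ∃ j, (W j).Nonempty
  exists_ne_univ : ∃ j, W j ≠ Set.univ

/-- A junk value unless `{j | x ∈ W j}` is nonempty and bounded below, as it is for an
`IsSublevelChain` on a preconnected graph (`IsSublevelChain.mem_iff_level_le`). -/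
noncomputable def level (W : ℤ → Set α) (x : α) : ℤ := sInf {j | x ∈ W j}

namespace IsSublevelChain

theorem mem_add_one_of_adj (hW : IsSublevelChain G W) {x y : α} {j : ℤ} (hxy : G.Adj x y)
    (hx : x ∈ W j) : y ∈ W (j + 1) := by
  by_contra hy
  have := hW.eq_of_crosses hxy hx (fun h => hy (hW.monotone (by omega) h))
    (hW.monotone (by omega) hx) hy
  omega

theorem notMem_sub_one_of_adj (hW : IsSublevelChain G W) {x y : α} {j : ℤ} (hxy : G.Adj x y)
    (hx : x ∉ W j) : y ∉ W (j - 1) := fun hy => by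
  have := hW.eq_of_crosses hxy.symm hy (fun h => hx (hW.monotone (by omega) h))
    (hW.monotone (by omega) hy) hx
  omega

theorem exists_mem (hW : IsSublevelChain G W) (hG : G.Preconnected) (x : α) : ∃ j, x ∈ W j := by
  obtain ⟨j, a, ha⟩ := hW.exists_nonempty
  exact hG.induction_on (P := fun x => ∃ j, x ∈ W j)
    (fun _ _ hxy ⟨j, hj⟩ => ⟨j + 1, hW.mem_add_one_of_adj hxy hj⟩) ⟨j, ha⟩ x

theorem exists_notMem (hW : IsSublevelChain G W) (hG : G.Preconnected) (x : α) :
    ∃ j, x ∉ W j := by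
  obtain ⟨j, hj⟩ := hW.exists_ne_univ
  obtain ⟨b, hb⟩ := (Set.ne_univ_iff_exists_notMem _).1 hj
  exact hG.induction_on (P := fun x => ∃ j, x ∉ W j)
    (fun _ _ hxy ⟨j, hj⟩ => ⟨j - 1, hW.notMem_sub_one_of_adj hxy hj⟩) ⟨j, hb⟩ x

theorem mem_iff_level_le (hW : IsSublevelChain G W) (hG : G.Preconnected) {x : α} {j : ℤ} :
    x ∈ W j ↔ level W x ≤ j := by
  obtain ⟨k, hk⟩ := hW.exists_notMem hG x
  have hbdd : BddBelow {j | x ∈ W j} :=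
    ⟨k, fun j hj => not_lt.1 fun hjk => hk (hW.monotone hjk.le hj)⟩
  exact ⟨fun hx => csInf_le hbdd hx,
    fun hle => hW.monotone hle (Int.csInf_mem (hW.exists_mem hG x) hbdd)⟩

theorem level_le_level_add_one_of_adj (hW : IsSublevelChain G W) (hG : G.Preconnected)
    {x y : α} (hxy : G.Adj x y) : level W y ≤ level W x + 1 :=
  (hW.mem_iff_level_le hG).1 (hW.mem_add_one_of_adj hxy ((hW.mem_iff_level_le hG).2 le_rfl))

theorem exists_crosses_of_level_ne (hW : IsSublevelChain G W) (hG : G.Preconnected) {x y : α}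
    (h : level W x ≠ level W y) : ∃ j, (x ∈ W j ∧ y ∉ W j) ∨ (y ∈ W j ∧ x ∉ W j) := by
  simp only [hW.mem_iff_level_le hG]
  rcases h.lt_or_gt with h | h
  · exact ⟨level W x, Or.inl ⟨le_rfl, by omega⟩⟩
  · exact ⟨level W y, Or.inr ⟨le_rfl, by omega⟩⟩

theorem level_apply_eq (hW : IsSublevelChain G W) (hG : G.Preconnected) {f : α → α} {ℓ : ℤ}
    (hf : ∀ j x, f x ∈ W (j + ℓ) ↔ x ∈ W j) (x : α) : level W (f x) = level W x + ℓ := by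
  have h₁ := (hf (level W x) x).2 ((hW.mem_iff_level_le hG).2 le_rfl)
  have h₂ := (hf (level W (f x) - ℓ) x).1
    (by rw [sub_add_cancel]; exact (hW.mem_iff_level_le hG).2 le_rfl)
  rw [hW.mem_iff_level_le hG] at h₁ h₂
  omega

end IsSublevelChain

end SublevelChain

theorem sub_le_card_filter_ne {g : ℕ → ℤ} (hg : ∀ k, g (k + 1) ≤ g k + 1) (n : ℕ) :
    g n - g 0 ≤ #{k ∈ range n | g (k + 1) ≠ g k} := by
  induction n with
  | zero => simp
  | succ n ih =>
    have := hg n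
    rw [range_add_one, filter_insert]
    split_ifs with h
    · rw [card_insert_of_notMem (by simp)]
      push_cast
      omega
    · omega

section Lattice

variable {d : ℕ}

theorem latticeGraph_adj_add_single (x : Fin d → ℤ) (i : Fin d) :
    (latticeGraph d).Adj x (x + Pi.single i 1) :=
  ⟨i, Or.inl (by simp), fun j hj => by simp [Pi.single_eq_of_ne hj]⟩

theorem latticeGraph_adj_sub_right {x y : Fin d → ℤ} (h : (latticeGraph d).Adj x y)
    (z : Fin d → ℤ) : (latticeGraph d).Adj (x - z) (y - z) := by
  obtain ⟨i, hi, hj⟩ := h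
  exact ⟨i, by simp only [Pi.sub_apply]; omega, fun j hji => by simp [hj j hji]⟩

theorem latticeGraph_reachable_add_single (x : Fin d → ℤ) (i : Fin d) (k : ℤ) :
    (latticeGraph d).Reachable x (x + Pi.single i k) := by
  induction k using Int.induction_on with
  | zero => simp
  | succ k ih =>
    refine ih.trans (latticeGraph_adj_add_single _ i).reachable |>.trans ?_
    rw [add_assoc, ← Pi.single_add]
  | pred k ih =>
    refine ih.trans (SimpleGraph.Adj.reachable ?_)
    have := latticeGraph_adj_add_single (x + Pi.single i (-(k : ℤ) - 1)) i
    rw [add_assoc, ← Pi.single_add, sub_add_cancel] at this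
    exact this.symm

theorem latticeGraph_preconnected : (latticeGraph d).Preconnected := by
  intro x y
  suffices h : ∀ s : Finset (Fin d),
      (latticeGraph d).Reachable x (x + ∑ i ∈ s, Pi.single i ((y - x) i)) by
    simpa only [Finset.univ_sum_single, add_sub_cancel] using h univ
  intro s
  induction s using Finset.induction_on with
  | empty => simp
  | insert i s hi ih =>
    rw [sum_insert hi, add_comm (Pi.single _ _), ← add_assoc]
    exact ih.trans (latticeGraph_reachable_add_single _ i _)

theorem mem_edgeBdry_of_mem_edgeBdry_image_add {U : Set (Fin d → ℤ)} {z a b : Fin d → ℤ}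
    (h : (a, b) ∈ edgeBdry d ((· + z) '' U)) : (a - z, b - z) ∈ edgeBdry d U := by
  simp only [edgeBdry, Set.image_add_right, Set.mem_preimage,
    ← sub_eq_add_neg] at h ⊢
  exact ⟨latticeGraph_adj_sub_right h.1 z, h.2⟩

theorem TranslationRespecting.isSublevelChain {n : ℕ} {V : Set (Fin d → ℤ)}
    (hV : TranslationRespecting n d V) {W : ℤ → Set (Fin d → ℤ)} (hmono : StrictMono W)
    (hmem : ∀ j, W j ∈ translates n d V) (h₀ : W 0 = V) :
    IsSublevelChain (latticeGraph d) W where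
  monotone := hmono.monotone
  eq_of_crosses x y hxy j k hxj hyj hxk hyk := by
    by_contra hjk
    have hdisj := (hV.2 _ (hmem j) _ (hmem k) (hmono.injective.ne hjk)).1
    exact Set.eq_empty_iff_forall_notMem.1 hdisj (x, y)
      ⟨⟨hxy, Or.inl ⟨hxj, hyj⟩⟩, ⟨hxy, Or.inl ⟨hxk, hyk⟩⟩⟩
  exists_nonempty := ⟨0, h₀ ▸ Set.nonempty_iff_ne_empty.2 hV.1.1⟩
  exists_ne_univ := ⟨0, h₀ ▸ hV.1.2.1⟩

end Lattice

section Torus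

variable {n d : ℕ}

def torusLift (w : Fin d → ZMod n) : Fin d → ℤ := fun j => ((w j).val : ℤ)

theorem latticeProj_torusLift [NeZero n] (w : Fin d → ZMod n) :
    latticeProj n d (torusLift w) = w := by
  funext j
  simp [latticeProj, torusLift]

theorem latticeProj_add (x y : Fin d → ℤ) :
    latticeProj n d (x + y) = latticeProj n d x + latticeProj n d y := by
  funext j
  simp [latticeProj]

theorem latticeProj_sub_of_dvd {z : Fin d → ℤ} (hz : ∀ i, (n : ℤ) ∣ z i) (x : Fin d → ℤ) :
    latticeProj n d (x - z) = latticeProj n d x := by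
  funext j
  simp [latticeProj, (ZMod.intCast_zmod_eq_zero_iff_dvd _ n).2 (hz j)]

theorem exists_torusLift_funSplitAt_symm_eq (i : Fin d) (t : {j // j ≠ i} → ZMod n) :
    ∃ y : Fin d → ℤ, ∀ s : ZMod n,
      torusLift ((Equiv.funSplitAt i (ZMod n)).symm (s, t)) = y + Pi.single i (s.val : ℤ) := by
  refine ⟨torusLift ((Equiv.funSplitAt i (ZMod n)).symm (0, t)), fun s => funext fun j => ?_⟩
  by_cases hj : j = i
  · subst hj
    simp [torusLift, Equiv.funSplitAt_symm_apply]
  · simp [torusLift, Equiv.funSplitAt_symm_apply, hj]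

theorem le_card_filter_add_single_ne [NeZero n] (i : Fin d) {h : (Fin d → ℤ) → ℤ}
    {ℓ : ℤ} (hstep : ∀ x, h (x + Pi.single i 1) ≤ h x + 1)
    (hper : ∀ x, h (x + Pi.single i (n : ℤ)) = h x + ℓ) (y : Fin d → ℤ) :
    ℓ ≤ #{s : ZMod n | h (y + Pi.single i (s.val : ℤ) + Pi.single i 1) ≠
      h (y + Pi.single i (s.val : ℤ))} := by
  set g : ℕ → ℤ := fun k => h (y + Pi.single i (k : ℤ))
  have hg : ∀ k : ℕ, h (y + Pi.single i (k : ℤ) + Pi.single i 1) = g (k + 1) := fun k => by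
    simp [g, add_assoc, ← Pi.single_add]
  have hcard : #{s : ZMod n | g (s.val + 1) ≠ g s.val} = #{k ∈ range n | g (k + 1) ≠ g k} := by
    refine card_nbij' ZMod.val (↑) (fun s hs => ?_) (fun k hk => ?_) (fun s _ => ?_)
      (fun k hk => ?_)
    · simp_all [ZMod.val_lt]
    · simp_all [Nat.mod_eq_of_lt]
    · simp
    · simp_all [Nat.mod_eq_of_lt]
  have hgn : g n - g 0 = ℓ := by simp [g, hper]
  simp_rw [hg]
  rw [hcard, ← hgn]
  exact sub_le_card_filter_ne (fun k => by rw [← hg]; exact hstep _) n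

theorem mul_pow_le_card_jumps [NeZero n] (i : Fin d) {h : (Fin d → ℤ) → ℤ} {ℓ : ℤ}
    (hstep : ∀ x, h (x + Pi.single i 1) ≤ h x + 1)
    (hper : ∀ x, h (x + Pi.single i (n : ℤ)) = h x + ℓ) :
    ℓ * n ^ (d - 1) ≤
      Nat.card {w : Fin d → ZMod n // h (torusLift w + Pi.single i 1) ≠ h (torusLift w)} := by
  classical
  have hcard : Nat.card {w : Fin d → ZMod n // h (torusLift w + Pi.single i 1) ≠ h (torusLift w)}
      = ∑ t, #{s | h (torusLift ((Equiv.funSplitAt i (ZMod n)).symm (s, t)) + Pi.single i 1) ≠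
          h (torusLift ((Equiv.funSplitAt i (ZMod n)).symm (s, t)))} := by
    rw [Nat.card_eq_fintype_card, Fintype.card_subtype, card_filter,
      ← (Equiv.funSplitAt i (ZMod n)).symm.sum_comp,
      Fintype.sum_prod_type_right]
    simp only [card_filter]
  rw [hcard, Nat.cast_sum]
  calc ℓ * n ^ (d - 1) = ∑ _t : {j // j ≠ i} → ZMod n, ℓ := by
        rw [sum_const, card_univ, Fintype.card_fun, ZMod.card, Fintype.card_subtype_compl,
          Fintype.card_subtype_eq, Fintype.card_fin, nsmul_eq_mul, mul_comm, Nat.cast_pow]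
    _ ≤ _ := sum_le_sum fun t _ => by
        obtain ⟨y, hy⟩ := exists_torusLift_funSplitAt_symm_eq i t
        simp_rw [hy]
        exact le_card_filter_add_single_ne i hstep hper y

theorem card_level_jumps_le_card_edgeBdry [NeZero n] {V : Set (Fin d → ℤ)} {Δ : Fin d → ℤ}
    (hΔ : ∀ i, (n : ℤ) ∣ Δ i) (hW : IsSublevelChain (latticeGraph d) (translateChain V Δ))
    (i : Fin d) :
    Nat.card {w : Fin d → ZMod n // level (translateChain V Δ) (torusLift w + Pi.single i 1) ≠
        level (translateChain V Δ) (torusLift w)} ≤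
      Nat.card ↥{p : (Fin d → ZMod n) × (Fin d → ZMod n) |
        p.1 - p.2 = latticeProj n d (Pi.single i 1) ∧
        ∃ x0 x1 : Fin d → ℤ, (x0, x1) ∈ edgeBdry d V ∧
          latticeProj n d x0 = p.1 ∧ latticeProj n d x1 = p.2} := by
  refine Nat.card_le_card_of_injective
    (fun w => ⟨(w.1 + latticeProj n d (Pi.single i 1), w.1), ?_⟩)
    fun w w' h => Subtype.ext (congrArg (fun p => p.1.2) h)
  obtain ⟨j, hj⟩ := hW.exists_crosses_of_level_ne latticeGraph_preconnected w.2
  have hjΔ : ∀ i, (n : ℤ) ∣ (j • Δ) i := fun i => by simpa using (hΔ i).mul_left j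
  refine ⟨by simp, _, _,
    mem_edgeBdry_of_mem_edgeBdry_image_add ⟨(latticeGraph_adj_add_single _ _).symm, hj⟩, ?_, ?_⟩
  · rw [latticeProj_sub_of_dvd hjΔ, latticeProj_add, latticeProj_torusLift]
  · rw [latticeProj_sub_of_dvd hjΔ, latticeProj_torusLift]

theorem TranslationRespecting.mul_pow_le_card_edgeBdry [NeZero n] {V : Set (Fin d → ℤ)}
    (hV : TranslationRespecting n d V) {Δ : Fin d → ℤ} (hΔ : ∀ i, (n : ℤ) ∣ Δ i)
    (hΔV : V ⊂ (· + Δ) '' V) (i : Fin d) {ℓ : ℤ}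
    (hℓ : (· + ℓ • Δ) '' V = (· + Pi.single i (n : ℤ)) '' V) :
    ℓ * (n : ℤ) ^ (d - 1) ≤
      (Nat.card ↥{p : (Fin d → ZMod n) × (Fin d → ZMod n) |
        p.1 - p.2 = latticeProj n d (Pi.single i 1) ∧
        ∃ x0 x1 : Fin d → ℤ, (x0, x1) ∈ edgeBdry d V ∧
          latticeProj n d x0 = p.1 ∧ latticeProj n d x1 = p.2} : ℤ) := by
  have hW : IsSublevelChain (latticeGraph d) (translateChain V Δ) :=
    hV.isSublevelChain (translateChain_strictMono hΔV)
      (fun j => ⟨j • Δ, fun i => by simpa using (hΔ i).mul_left j, rfl⟩)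
      (by simp [translateChain])
  have hG := latticeGraph_preconnected (d := d)
  refine (mul_pow_le_card_jumps i (fun x => hW.level_le_level_add_one_of_adj hG
      (latticeGraph_adj_add_single x i))
    (hW.level_apply_eq hG (add_mem_translateChain_add_iff hℓ))).trans ?_
  exact_mod_cast card_level_jumps_le_card_edgeBdry hΔ hW i

end Torus

end P3C

theorem stmt13_general (n d : ℕ) (hn : 2 ≤ n) (hd : 0 < d)
    (V : Set (Fin d → ℤ)) (hV : P3C.TypeZero n d V)
    (Δ : Fin d → ℤ) (hΔdvd : ∀ i, (n : ℤ) ∣ Δ i)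
    (hΔ1 : V ⊂ (fun u => u + Δ) '' V)
    (ℓ : ℤ)
    (hℓ : (fun u => u + ℓ • Δ) '' V =
      (fun u => u + Pi.single (⟨0, hd⟩ : Fin d) (n : ℤ)) '' V) :
    ℓ * (n : ℤ) ^ (d - 1) ≤
      (Nat.card ↥{p : (Fin d → ZMod n) × (Fin d → ZMod n) |
        p.1 - p.2 = P3C.latticeProj n d (Pi.single (⟨0, hd⟩ : Fin d) 1) ∧
        ∃ x0 x1 : Fin d → ℤ, (x0, x1) ∈ P3C.edgeBdry d V ∧
          P3C.latticeProj n d x0 = p.1 ∧ P3C.latticeProj n d x1 = p.2} : ℤ) := by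
  have : NeZero n := ⟨by omega⟩
  exact hV.1.mul_pow_le_card_edgeBdry hΔdvd hΔ1 _ hℓ

theorem stmt13 (n d : ℕ) (hn : 2 ≤ n) (hd : 0 < d)
    (V : Set (Fin d → ℤ)) (hV : P3C.TypeZero n d V)
    (Δ : Fin d → ℤ) (hΔdvd : ∀ i, (n : ℤ) ∣ Δ i)
    (hΔ1 : V ⊂ (fun u => u + Δ) '' V)
    (hΔmin : ¬ ∃ W ∈ P3C.translates n d V, V ⊂ W ∧ W ⊂ (fun u => u + Δ) '' V)
    (ℓ : ℤ)
    (hℓ : (fun u => u + ℓ • Δ) '' V =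
      (fun u => u + Pi.single (⟨0, hd⟩ : Fin d) (n : ℤ)) '' V) :
    ℓ * (n : ℤ) ^ (d - 1) ≤
      (Nat.card ↥{p : (Fin d → ZMod n) × (Fin d → ZMod n) |
        p.1 - p.2 = P3C.latticeProj n d (Pi.single (⟨0, hd⟩ : Fin d) 1) ∧
        ∃ x0 x1 : Fin d → ℤ, (x0, x1) ∈ P3C.edgeBdry d V ∧
          P3C.latticeProj n d x0 = p.1 ∧ P3C.latticeProj n d x1 = p.2} : ℤ) :=
  stmt13_general n d hn hd V hV Δ hΔdvd hΔ1 ℓ hℓ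
end

section
/- If U ⊂ ℤ^d is a bi-connected set of vertices, then the internal vertex boundary ∂_in U is a connected set in the graph G_U. -/
/-!
Fix `u₀ ∈ ∂_in U` and let `S` be the set of vertices of `∂_in U` reachable from `u₀` in `G_U`.
Consider the `ℤ/2`-valued edge function `φ` that is `1` exactly on the edges of `∂U` whose endpoint
in `U` lies in `S`. The edges of `∂U` on a 4-cycle are even in number and their endpoints in `U`
are pairwise adjacent in `G_U`, so `φ` sums to `0` around every 4-cycle. Closed lattice paths are
generated by 4-cycles (reorder the steps of a closed path to bring a step next to its inverse and
cancel), so `φ` sums to `0` along every closed walk. For `v₀ ∈ ∂_in U`, close up a path from `u₀` to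
`v₀` in `U`, an edge of `∂U` at `v₀`, a path in `Uᶜ` and an edge of `∂U` at `u₀`: the sum along it
is `φ(v₀, w) + 1`, hence `φ(v₀, w) = 1` and `v₀ ∈ S`. Both paths exist because `U` is bi-connected.
-/

namespace P3C

variable {d : ℕ}

def IsUnitStep (s : Fin d → ℤ) : Prop :=
  ∃ i, s = Pi.single i 1 ∨ s = -Pi.single i 1

lemma IsUnitStep.neg {s : Fin d → ℤ} (hs : IsUnitStep s) : IsUnitStep (-s) := by
  obtain ⟨i, rfl | rfl⟩ := hs
  exacts [⟨i, Or.inr rfl⟩, ⟨i, Or.inl (neg_neg _)⟩]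

lemma latticeGraph_adj_iff {u v : Fin d → ℤ} :
    (latticeGraph d).Adj u v ↔ IsUnitStep (v - u) := by
  simp only [latticeGraph, IsUnitStep, funext_iff, Pi.sub_apply, Pi.neg_apply, Pi.single_apply]
  refine exists_congr fun i => ⟨?_, ?_⟩
  · rintro ⟨h | h, hj⟩
    · exact Or.inl fun j => by by_cases hji : j = i <;> simp [hji, h, hj]
    · exact Or.inr fun j => by by_cases hji : j = i <;> simp [hji, h, hj]
  · rintro (h | h)
    · refine ⟨Or.inl ?_, fun j hj => ?_⟩
      · have := h i; simp at this; omega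
      · have := h j; simp [hj] at this; omega
    · refine ⟨Or.inr ?_, fun j hj => ?_⟩
      · have := h i; simp at this; omega
      · have := h j; simp [hj] at this; omega

lemma latticeGraph_adj_add_iff {u s : Fin d → ℤ} :
    (latticeGraph d).Adj u (u + s) ↔ IsUnitStep s := by
  rw [latticeGraph_adj_iff, add_sub_cancel_left]

lemma IsUnitStep.dotProduct_self {s : Fin d → ℤ} (hs : IsUnitStep s) : s ⬝ᵥ s = 1 := by
  obtain ⟨i, rfl | rfl⟩ := hs <;> simp

lemma IsUnitStep.dotProduct_nonneg {s t : Fin d → ℤ} (hs : IsUnitStep s) (ht : IsUnitStep t)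
    (hts : t ≠ -s) : 0 ≤ s ⬝ᵥ t := by
  obtain ⟨i, rfl | rfl⟩ := hs <;> obtain ⟨j, rfl | rfl⟩ := ht <;>
    rcases eq_or_ne i j with rfl | hij <;> simp_all

lemma dotProduct_list_sum {m α : Type*} [Fintype m] [NonUnitalNonAssocSemiring α] (s : m → α)
    (L : List (m → α)) : s ⬝ᵥ L.sum = (L.map (s ⬝ᵥ ·)).sum := by
  induction L with
  | nil => simp
  | cons t L ih => simp [dotProduct_add, ih]

lemma IsUnitStep.neg_mem_of_add_sum_eq_zero {s : Fin d → ℤ} {L : List (Fin d → ℤ)}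
    (hs : IsUnitStep s) (hL : ∀ t ∈ L, IsUnitStep t) (hsum : s + L.sum = 0) : -s ∈ L := by
  by_contra hneg
  have hnonneg : 0 ≤ (L.map (s ⬝ᵥ ·)).sum :=
    List.sum_nonneg (by
      simp only [List.mem_map]
      rintro _ ⟨t, ht, rfl⟩
      exact hs.dotProduct_nonneg (hL t ht) (ne_of_mem_of_not_mem ht hneg))
  have := congrArg (s ⬝ᵥ ·) hsum
  simp only [dotProduct_add, hs.dotProduct_self, dotProduct_list_sum, dotProduct_zero] at this
  omega

lemma isFourCycle_add {s t : Fin d → ℤ} (v : Fin d → ℤ) (hs : IsUnitStep s) (ht : IsUnitStep t)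
    (hst : s ≠ t) (hst' : t ≠ -s) : IsFourCycle d v (v + s) (v + s + t) (v + t) := by
  refine ⟨latticeGraph_adj_add_iff.2 hs, latticeGraph_adj_add_iff.2 ht, ?_, ?_, ?_, ?_⟩
  · rw [latticeGraph_adj_iff, show v + t - (v + s + t) = -s by abel]
    exact hs.neg
  · rw [latticeGraph_adj_iff, show v - (v + t) = -t by abel]
    exact ht.neg
  · intro h
    exact hst' (eq_neg_of_add_eq_zero_right (by simpa [add_assoc] using h.symm))
  · simpa using hst

lemma reachable_add_single (u : Fin d → ℤ) (i : Fin d) (k : ℤ) :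
    (latticeGraph d).Reachable u (u + Pi.single i k) := by
  induction k using Int.induction_on with
  | zero => simp
  | succ k ih =>
    refine ih.trans (SimpleGraph.Adj.reachable ?_)
    rw [Pi.single_add, ← add_assoc, latticeGraph_adj_add_iff]
    exact ⟨i, Or.inl rfl⟩
  | pred k ih =>
    refine ih.trans (SimpleGraph.Adj.reachable ?_)
    rw [sub_eq_add_neg, Pi.single_add, ← add_assoc, latticeGraph_adj_add_iff, Pi.single_neg]
    exact ⟨i, Or.inr rfl⟩

lemma latticeGraph_connected : (latticeGraph d).Connected := by
  refine (latticeGraph d).connected_iff_exists_forall_reachable.2 ⟨0, fun v => ?_⟩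
  have h : ∀ s : Finset (Fin d), (latticeGraph d).Reachable 0 (∑ i ∈ s, Pi.single i (v i)) := by
    intro s
    induction s using Finset.induction_on with
    | empty => simp
    | insert i s hi ih =>
      rw [Finset.sum_insert hi, add_comm]
      exact ih.trans (reachable_add_single _ i _)
  simpa only [Finset.univ_sum_single] using h Finset.univ

def circulation {V R : Type*} [AddCommMonoid R] {G : SimpleGraph V} (φ : V → V → R) {u v : V}
    (p : G.Walk u v) : R :=
  (p.darts.map fun e => φ e.fst e.snd).sum

section Circulation

variable {V R : Type*} [AddCommMonoid R] {G : SimpleGraph V} (φ : V → V → R)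

@[simp]
lemma circulation_nil {u : V} : circulation φ (SimpleGraph.Walk.nil : G.Walk u u) = 0 := rfl

@[simp]
lemma circulation_cons {u v w : V} (h : G.Adj u v) (p : G.Walk v w) :
    circulation φ (.cons h p) = φ u v + circulation φ p := by
  simp [circulation]

@[simp]
lemma circulation_append {u v w : V} (p : G.Walk u v) (q : G.Walk v w) :
    circulation φ (p.append q) = circulation φ p + circulation φ q := by
  simp [circulation]

lemma circulation_map_induce_eq_zero {W : Set V} (hW : ∀ x ∈ W, ∀ y ∈ W, φ x y = 0) {x y : W}
    (p : (G.induce W).Walk x y) :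
    circulation φ (p.map (SimpleGraph.Embedding.induce W).toHom) = 0 := by
  induction p with
  | nil => rfl
  | @cons a b _ _ _ ih =>
    rw [SimpleGraph.Walk.map_cons, circulation_cons, ih, add_zero]
    exact hW _ a.2 _ b.2

lemma exists_walk_circulation_eq_zero_of_reachable_induce {W : Set V}
    (hW : ∀ x ∈ W, ∀ y ∈ W, φ x y = 0) {x y : V} {hx : x ∈ W} {hy : y ∈ W}
    (h : (G.induce W).Reachable ⟨x, hx⟩ ⟨y, hy⟩) : ∃ p : G.Walk x y, circulation φ p = 0 :=
  h.elim fun p =>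
    ⟨p.map (SimpleGraph.Embedding.induce W).toHom, circulation_map_induce_eq_zero φ hW p⟩

end Circulation

section PathSum

variable {R : Type*} [AddCommGroup R] (φ : (Fin d → ℤ) → (Fin d → ℤ) → R)

def pathSum : (Fin d → ℤ) → List (Fin d → ℤ) → R
  | _, [] => 0
  | v, s :: L => φ v (v + s) + pathSum (v + s) L

lemma exists_pathSum_eq_circulation {u v : Fin d → ℤ} (p : (latticeGraph d).Walk u v) :
    ∃ L, (∀ s ∈ L, IsUnitStep s) ∧ u + L.sum = v ∧ pathSum φ u L = circulation φ p := by
  induction p with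
  | nil => exact ⟨[], by simp, by simp, rfl⟩
  | @cons u w v h p ih =>
    obtain ⟨L, hL, hsum, hφ⟩ := ih
    refine ⟨(w - u) :: L, ?_, ?_, ?_⟩
    · simp only [List.mem_cons, forall_eq_or_imp]
      exact ⟨latticeGraph_adj_iff.1 h, hL⟩
    · rwa [List.sum_cons, ← add_assoc, add_sub_cancel]
    · rw [pathSum, add_sub_cancel, hφ, circulation_cons]

section ClosedCochain

variable {φ} (hanti : ∀ x y, φ y x = -φ x y)
  (hsq : ∀ a b c e, IsFourCycle d a b c e → φ a b + φ b c + φ c e + φ e a = 0)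

include hanti in
lemma pathSum_cons_cons_neg (v s : Fin d → ℤ) (L : List (Fin d → ℤ)) :
    pathSum φ v (s :: -s :: L) = pathSum φ v L := by
  simp only [pathSum, add_neg_cancel_right, hanti (v + s) v, neg_add_cancel_left]

include hanti hsq in
lemma pathSum_swap {s t : Fin d → ℤ} (hs : IsUnitStep s) (ht : IsUnitStep t) (v : Fin d → ℤ)
    (L : List (Fin d → ℤ)) : pathSum φ v (s :: t :: L) = pathSum φ v (t :: s :: L) := by
  rcases eq_or_ne s t with rfl | hst
  · rfl
  rcases eq_or_ne t (-s) with rfl | hts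
  · rw [pathSum_cons_cons_neg hanti, ← pathSum_cons_cons_neg hanti v (-s), neg_neg]
  have hsq' := hsq _ _ _ _ (isFourCycle_add v hs ht hst hts)
  rw [hanti (v + t) (v + s + t), hanti v (v + t)] at hsq'
  simp only [pathSum, add_right_comm v t s]
  rw [← sub_eq_zero, ← hsq']
  abel

include hanti hsq in
lemma pathSum_perm {L M : List (Fin d → ℤ)} (h : L.Perm M) (hL : ∀ s ∈ L, IsUnitStep s)
    (v : Fin d → ℤ) : pathSum φ v L = pathSum φ v M := by
  induction h generalizing v with
  | nil => rfl
  | cons s _ ih => simp only [pathSum, ih (fun t ht => hL t (by simp [ht]))]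
  | swap s t L => exact pathSum_swap hanti hsq (hL t (by simp)) (hL s (by simp)) v L
  | trans h₁ _ ih₁ ih₂ =>
    exact (ih₁ hL v).trans (ih₂ (fun t ht => hL t (h₁.mem_iff.2 ht)) v)

include hanti hsq in
lemma pathSum_eq_zero_of_sum_eq_zero {L : List (Fin d → ℤ)} (hL : ∀ s ∈ L, IsUnitStep s)
    (hsum : L.sum = 0) (v : Fin d → ℤ) : pathSum φ v L = 0 := by
  induction h : L.length using Nat.strong_induction_on generalizing L with
  | _ n ih =>
  cases L with
  | nil => rfl
  | cons s M =>
    have hs : IsUnitStep s := hL s (by simp)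
    have hM : ∀ t ∈ M, IsUnitStep t := fun t ht => hL t (by simp [ht])
    have hmem : -s ∈ M := hs.neg_mem_of_add_sum_eq_zero hM (by simpa using hsum)
    have hperm : (s :: M).Perm (s :: -s :: M.erase (-s)) := (List.perm_cons_erase hmem).cons s
    rw [pathSum_perm hanti hsq hperm hL, pathSum_cons_cons_neg hanti]
    refine ih _ ?_ (fun t ht => hM t (List.mem_of_mem_erase ht)) ?_ rfl
    · simp [← h, List.length_erase_of_mem hmem]
    · simpa [hsum] using hperm.sum_eq.symm

include hanti hsq in
theorem circulation_eq_zero_of_forall_isFourCycle {v : Fin d → ℤ}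
    (p : (latticeGraph d).Walk v v) : circulation φ p = 0 := by
  obtain ⟨L, hL, hsum, hφ⟩ := exists_pathSum_eq_circulation φ p
  rw [← hφ]
  exact pathSum_eq_zero_of_sum_eq_zero hanti hsq hL (by simpa using hsum) v

end ClosedCochain

end PathSum

lemma induce_connected_of_forall_closed {V : Type*} {G : SimpleGraph V} {T : Set V} {u : V}
    (hu : u ∈ T) (h : ∀ S ⊆ T, u ∈ S → (∀ x ∈ S, ∀ y ∈ T, G.Adj x y → y ∈ S) → T ⊆ S) :
    (G.induce T).Connected := by
  refine (G.induce T).connected_iff_exists_forall_reachable.2 ⟨⟨u, hu⟩, fun ⟨v, hv⟩ => ?_⟩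
  exact (h {y | ∃ hy : y ∈ T, (G.induce T).Reachable ⟨u, hu⟩ ⟨y, hy⟩} (fun y hy => hy.1)
    ⟨hu, .rfl⟩ (fun x ⟨_, hr⟩ y hy hxy => ⟨hy, hr.trans (SimpleGraph.Adj.reachable hxy)⟩) hv).2

/-- For `S ⊆ U`, this is `1` exactly on the edges of `∂U` whose endpoint in `U` lies in `S`. -/
noncomputable def bdryCochain {V : Type*} (U S : Set V) (x y : V) : ZMod 2 :=
  (U.indicator 1 x + U.indicator 1 y) * (S.indicator 1 x + S.indicator 1 y)

section BdryCochain

variable {V : Type*} {U S : Set V}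

lemma bdryCochain_comm (x y : V) : bdryCochain U S x y = bdryCochain U S y x := by
  simp only [bdryCochain, add_comm]

lemma bdryCochain_of_mem_of_mem {x y : V} (hx : x ∈ U) (hy : y ∈ U) :
    bdryCochain U S x y = 0 := by
  simp [bdryCochain, hx, hy, CharTwo.add_self_eq_zero]

lemma bdryCochain_of_notMem_of_notMem {x y : V} (hx : x ∉ U) (hy : y ∉ U) :
    bdryCochain U S x y = 0 := by
  simp [bdryCochain, hx, hy]

lemma bdryCochain_of_mem_of_notMem (hSU : S ⊆ U) {x y : V} (hx : x ∈ U) (hy : y ∉ U) :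
    bdryCochain U S x y = S.indicator 1 x := by
  have hyS : y ∉ S := fun h => hy (hSU h)
  simp [bdryCochain, hx, hy, hyS]

end BdryCochain

variable {U S : Set (Fin d → ℤ)}

lemma mem_inBdry {u : Fin d → ℤ} :
    u ∈ inBdry d U ↔ u ∈ U ∧ ∃ w, (latticeGraph d).Adj u w ∧ w ∉ U := by
  simp [inBdry, vminus]

lemma inBdry_nonempty (hU : U.Nonempty) (hUc : Uᶜ.Nonempty) : (inBdry d U).Nonempty := by
  obtain ⟨u, hu⟩ := hU
  obtain ⟨v, hv⟩ := hUc
  obtain ⟨p⟩ := latticeGraph_connected.preconnected u v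
  obtain ⟨e, -, he₁, he₂⟩ := p.exists_boundary_dart U hu hv
  exact ⟨e.fst, mem_inBdry.2 ⟨he₁, e.snd, e.adj, he₂⟩⟩

lemma cycleEdge_swap {a b c e x y : Fin d → ℤ} (h : cycleEdge d a b c e (x, y)) :
    cycleEdge d a b c e (y, x) := by
  simp only [cycleEdge] at h ⊢
  rwa [Set.pair_comm y x]

lemma IsFourCycle.adj_of_cycleEdge {a b c e x y : Fin d → ℤ} (hc : IsFourCycle d a b c e)
    (h : cycleEdge d a b c e (x, y)) : (latticeGraph d).Adj x y := by
  obtain ⟨hab, hbc, hce, hea, -, -⟩ := hc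
  rcases h with h | h | h | h <;> rcases Set.pair_eq_pair_iff.1 h with ⟨rfl, rfl⟩ | ⟨rfl, rfl⟩ <;>
    first | assumption | exact SimpleGraph.Adj.symm ‹_›

lemma mem_iff_of_cycleEdge
    (hS : ∀ x ∈ S, ∀ y ∈ inBdry d U, (bdryGraph d U).Adj x y → y ∈ S)
    {a b c e x y x' y' : Fin d → ℤ} (hc : IsFourCycle d a b c e)
    (h : cycleEdge d a b c e (x, y)) (h' : cycleEdge d a b c e (x', y'))
    (hx : x ∈ U) (hy : y ∉ U) (hx' : x' ∈ U) (hy' : y' ∉ U) : x ∈ S ↔ x' ∈ S := by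
  rcases eq_or_ne x x' with rfl | hxx'
  · rfl
  have hadj : (bdryGraph d U).Adj x x' :=
    ⟨hxx', (x, y), (x', y'), ⟨hc.adj_of_cycleEdge h, Or.inl ⟨hx, hy⟩⟩,
      ⟨hc.adj_of_cycleEdge h', Or.inl ⟨hx', hy'⟩⟩, Or.inl rfl, Or.inl rfl, a, b, c, e, hc, h, h'⟩
  exact ⟨fun hxS => hS x hxS x' (mem_inBdry.2 ⟨hx', y', hc.adj_of_cycleEdge h', hy'⟩) hadj,
    fun hxS => hS x' hxS x (mem_inBdry.2 ⟨hx, y, hc.adj_of_cycleEdge h, hy⟩) hadj.symm⟩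

lemma bdryCochain_fourCycle_sum (hSU : S ⊆ U) {a b c e : Fin d → ℤ}
    (hS : ∀ x y x' y', cycleEdge d a b c e (x, y) → cycleEdge d a b c e (x', y') →
      x ∈ U → y ∉ U → x' ∈ U → y' ∉ U → (x ∈ S ↔ x' ∈ S)) :
    bdryCochain U S a b + bdryCochain U S b c + bdryCochain U S c e + bdryCochain U S e a = 0 := by
  obtain ⟨κ, hκ⟩ : ∃ κ : ZMod 2, ∀ x y, cycleEdge d a b c e (x, y) → x ∈ U → y ∉ U →
      S.indicator 1 x = κ := by
    by_cases h : ∃ x y, cycleEdge d a b c e (x, y) ∧ x ∈ U ∧ y ∉ U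
    · obtain ⟨x₀, y₀, h₀, hx₀, hy₀⟩ := h
      refine ⟨S.indicator 1 x₀, fun x y h hx hy => ?_⟩
      have hiff := hS x y x₀ y₀ h h₀ hx hy hx₀ hy₀
      by_cases hx₀S : x₀ ∈ S
      · simp [hx₀S, hiff.2 hx₀S]
      · simp [hx₀S, mt hiff.1 hx₀S]
    · exact ⟨0, fun x y h' hx hy => (h ⟨x, y, h', hx, hy⟩).elim⟩
  have hedge : ∀ x y, cycleEdge d a b c e (x, y) →
      bdryCochain U S x y = (U.indicator 1 x + U.indicator 1 y) * κ := by
    intro x y hxy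
    by_cases hx : x ∈ U <;> by_cases hy : y ∈ U
    · simp [bdryCochain_of_mem_of_mem hx hy, hx, hy, CharTwo.add_self_eq_zero]
    · simp [bdryCochain_of_mem_of_notMem hSU hx hy, hκ x y hxy hx hy, hx, hy]
    · simp [bdryCochain_comm x, bdryCochain_of_mem_of_notMem hSU hy hx,
        hκ y x (cycleEdge_swap hxy) hy hx, hx, hy]
    · simp [bdryCochain_of_notMem_of_notMem hx hy, hx, hy]
  rw [hedge a b (Or.inl rfl), hedge b c (Or.inr (Or.inl rfl)),
    hedge c e (Or.inr (Or.inr (Or.inl rfl))), hedge e a (Or.inr (Or.inr (Or.inr rfl)))]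
  have two : (2 : ZMod 2) = 0 := rfl
  linear_combination (κ * (U.indicator 1 a + U.indicator 1 b + U.indicator 1 c + U.indicator 1 e))
    * two

lemma inBdry_subset_of_closed (hU : BiConnected d U) (hSB : S ⊆ inBdry d U)
    (hS : ∀ x ∈ S, ∀ y ∈ inBdry d U, (bdryGraph d U).Adj x y → y ∈ S) {u₀ : Fin d → ℤ}
    (hu₀ : u₀ ∈ S) : inBdry d U ⊆ S := by
  obtain ⟨-, -, hUconn, hUcconn⟩ := hU
  have hSU : S ⊆ U := hSB.trans Set.sdiff_subset
  have hsq : ∀ a b c e, IsFourCycle d a b c e → bdryCochain U S a b + bdryCochain U S b c +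
      bdryCochain U S c e + bdryCochain U S e a = 0 := fun a b c e hc =>
    bdryCochain_fourCycle_sum hSU fun _ _ _ _ h h' => mem_iff_of_cycleEdge hS hc h h'
  intro v₀ hv₀
  obtain ⟨hu₀U, w₀, hu₀w₀, hw₀⟩ := mem_inBdry.1 (hSB hu₀)
  obtain ⟨hv₀U, w, hv₀w, hw⟩ := mem_inBdry.1 hv₀
  obtain ⟨p, hp⟩ := exists_walk_circulation_eq_zero_of_reachable_induce (bdryCochain U S)
    (fun x hx y hy => bdryCochain_of_mem_of_mem hx hy)
    (hUconn.preconnected ⟨u₀, hu₀U⟩ ⟨v₀, hv₀U⟩)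
  obtain ⟨q, hq⟩ := exists_walk_circulation_eq_zero_of_reachable_induce (bdryCochain U S) (W := Uᶜ)
    (fun x hx y hy => bdryCochain_of_notMem_of_notMem hx hy)
    (hUcconn.preconnected ⟨w, hw⟩ ⟨w₀, hw₀⟩)
  have h := circulation_eq_zero_of_forall_isFourCycle (fun x y => by
      rw [bdryCochain_comm, ZMod.neg_eq_self_mod_two]) hsq
    (p.append (.cons hv₀w (q.append (.cons hu₀w₀.symm .nil))))
  simp only [circulation_append, circulation_cons, circulation_nil, hp, hq,
    bdryCochain_of_mem_of_notMem hSU hv₀U hw, bdryCochain_comm w₀,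
    bdryCochain_of_mem_of_notMem hSU hu₀U hw₀, Set.indicator_of_mem hu₀] at h
  by_contra hv
  simp [Set.indicator_of_notMem hv] at h

end P3C

theorem stmt14 (d : ℕ) (U : Set (Fin d → ℤ)) (hU : P3C.BiConnected d U) :
    P3C.ConnectedIn (P3C.bdryGraph d U) (P3C.inBdry d U) := by
  obtain ⟨u, hu⟩ := P3C.inBdry_nonempty (Set.nonempty_iff_ne_empty.2 hU.1)
    (Set.nonempty_compl.2 hU.2.1)
  exact P3C.induce_connected_of_forall_closed hu fun S hSB huS hS =>
    P3C.inBdry_subset_of_closed hU hSB hS huS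
end

section
/- For every h ∈ hm(ℤ^d) and every edge e of ℤ^d, there is exactly one sublevel component A of h with e ∈ ∂A. -/
/-!
If an edge `xy` leaves a sublevel component `A = LC^{k+}(u', v')`, then `x` lies in the
sublevel set `LL^{k+}(u')` (otherwise it would join the component of `y` in its complement),
and `h y = k + 1` (otherwise `y` would join the sublevel set). Hence `h x = k`, and since a
component is determined by any of its points, `A = LC^{k+}(x, y)`. So across an edge `uv` with
`h v = h u + 1` the only sublevel component that can separate `u` from `v` is
`LC^{(h u)+}(u, v)`, and it does separate them.
-/

namespace P3C

section compIn

variable {V : Type*} (G : SimpleGraph V)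

theorem mem_compIn_self {S : Set V} {u : V} (hu : u ∈ S) : u ∈ compIn G S u :=
  ⟨hu, hu, .refl _⟩

theorem compIn_subset (S : Set V) (u : V) : compIn G S u ⊆ S :=
  fun _ hw => hw.2.1

theorem compIn_eq_of_mem {S : Set V} {u w : V} (hw : w ∈ compIn G S u) :
    compIn G S w = compIn G S u := by
  obtain ⟨hu, hwS, huw⟩ := hw
  ext x
  exact ⟨fun ⟨_, hx, hwx⟩ => ⟨hu, hx, huw.trans hwx⟩,
    fun ⟨_, hx, hux⟩ => ⟨hwS, hx, huw.symm.trans hux⟩⟩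

theorem mem_compIn_of_adj {S : Set V} {u x y : V} (hx : x ∈ compIn G S u) (hy : y ∈ S)
    (hxy : G.Adj x y) : y ∈ compIn G S u := by
  obtain ⟨hu, hxS, hux⟩ := hx
  exact ⟨hu, hy, hux.trans (SimpleGraph.Adj.reachable (G := G.induce S)
    (u := ⟨x, hxS⟩) (v := ⟨y, hy⟩) hxy)⟩

theorem compIn_subset_of_forall_adj {S T : Set V} {u : V} (hu : u ∈ T)
    (hT : ∀ x y, x ∈ T → y ∈ S → G.Adj x y → y ∈ T) : compIn G S u ⊆ T := by
  suffices key : ∀ a b : S, (G.induce S).Reachable a b → (a : V) ∈ T → (b : V) ∈ T by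
    rintro w ⟨hu', hw, huw⟩
    exact key ⟨u, hu'⟩ ⟨w, hw⟩ huw hu
  rintro a b ⟨p⟩ ha
  induction p with
  | nil => exact ha
  | cons hxy _ ih => exact ih (hT _ _ ha (Subtype.prop _) hxy)

end compIn

theorem IsLatticeHHF.eq_add_one_or_eq_add_one {d : ℕ} {h : (Fin d → ℤ) → ℤ}
    (hh : IsLatticeHHF d h) {v w : Fin d → ℤ} (hvw : (latticeGraph d).Adj v w) :
    h w = h v + 1 ∨ h v = h w + 1 := by
  rcases (abs_eq zero_le_one).mp (hh v w hvw) with hd | hd <;> omega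

theorem edgeBdry_swap {d : ℕ} {A : Set (Fin d → ℤ)} {u v : Fin d → ℤ} :
    (v, u) ∈ edgeBdry d A ↔ (u, v) ∈ edgeBdry d A :=
  ⟨fun ⟨huv, hA⟩ => ⟨huv.symm, hA.symm⟩, fun ⟨huv, hA⟩ => ⟨huv.symm, hA.symm⟩⟩

section sublevel

variable {d : ℕ} {h : (Fin d → ℤ) → ℤ}

theorem le_of_mem_subLL (hh : IsLatticeHHF d h) {k : ℤ} {u w : Fin d → ℤ} (hu : h u ≤ k)
    (hw : w ∈ subLL d h k u) : h w ≤ k := by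
  refine compIn_subset_of_forall_adj (T := {w | h w ≤ k}) _ hu (fun x y hx hy hxy => ?_) hw
  have := hh.eq_add_one_or_eq_add_one hxy
  simp only [Set.mem_ofPred_eq] at hx hy ⊢
  omega

theorem subLC_eq_of_adj_of_mem_of_not_mem (hh : IsLatticeHHF d h) {k : ℤ}
    {u' v' x y : Fin d → ℤ} (hu' : h u' ≤ k) (hxy : (latticeGraph d).Adj x y)
    (hx : x ∈ subLC d h k u' v') (hy : y ∉ subLC d h k u' v') :
    h x = k ∧ h y = k + 1 ∧ subLC d h k u' v' = subLC d h k x y := by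
  set L := subLL d h k u'
  set C := compIn (latticeGraph d) Lᶜ v'
  have hyC : y ∈ C := not_not.mp hy
  have hxL : x ∈ L := by
    by_contra hxL
    exact hx (mem_compIn_of_adj _ hyC hxL hxy.symm)
  have hyL : y ∉ L := compIn_subset _ _ _ hyC
  have hyk : h y = k + 1 := by
    by_contra hyk
    exact hyL (mem_compIn_of_adj _ hxL hyk hxy)
  have hxk : h x ≤ k := le_of_mem_subLL hh hu' hxL
  have := hh.eq_add_one_or_eq_add_one hxy
  refine ⟨by omega, hyk, ?_⟩
  have hCy : compIn (latticeGraph d) (subLL d h k x)ᶜ y = C := by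
    have hLx : subLL d h k x = L := compIn_eq_of_mem _ hxL
    rw [hLx]
    exact compIn_eq_of_mem _ hyC
  simp only [subLC, hCy]
  rfl

theorem mem_subLC_self (hh : IsLatticeHHF d h) {u v : Fin d → ℤ} (huv : h v = h u + 1) :
    u ∈ subLC d h (h u) u v ∧ v ∉ subLC d h (h u) u v := by
  have huL : u ∈ subLL d h (h u) u := mem_compIn_self _ (by simp)
  have hvL : v ∉ subLL d h (h u) u := fun hvL => by
    have := le_of_mem_subLL hh le_rfl hvL
    omega
  exact ⟨fun huC => compIn_subset _ _ _ huC huL, not_not.mpr (mem_compIn_self _ hvL)⟩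

theorem existsUnique_sublevelComponent_of_eq_add_one (hh : IsLatticeHHF d h)
    {u v : Fin d → ℤ} (huv : (latticeGraph d).Adj u v) (hvu : h v = h u + 1) :
    ∃! A, IsSublevelComponent d h A ∧ (u, v) ∈ edgeBdry d A := by
  obtain ⟨hu, hv⟩ := mem_subLC_self hh hvu
  refine ⟨subLC d h (h u) u v, ⟨⟨u, v, h u, le_rfl, by omega, rfl⟩, huv, .inl ⟨hu, hv⟩⟩, ?_⟩
  rintro _ ⟨⟨u', v', k, hu'k, -, rfl⟩, -, ⟨huB, hvB⟩ | ⟨hvB, huB⟩⟩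
  · obtain ⟨rfl, -, hB⟩ := subLC_eq_of_adj_of_mem_of_not_mem hh hu'k huv huB hvB
    exact hB
  · obtain ⟨hvk, huk, -⟩ := subLC_eq_of_adj_of_mem_of_not_mem hh hu'k huv.symm hvB huB
    omega

end sublevel

end P3C

theorem stmt16 (d : ℕ) (h : (Fin d → ℤ) → ℤ) (hh : h ∈ P3C.homZeroLattice d)
    (u v : Fin d → ℤ) (huv : (P3C.latticeGraph d).Adj u v) :
    ∃! A : Set (Fin d → ℤ), P3C.IsSublevelComponent d h A ∧ (u, v) ∈ P3C.edgeBdry d A := by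
  wlog hvu : h v = h u + 1 generalizing u v
  · have huv' : h u = h v + 1 := (hh.1.eq_add_one_or_eq_add_one huv).resolve_left hvu
    simpa only [P3C.edgeBdry_swap] using this v u huv.symm huv'
  exact P3C.existsUnique_sublevelComponent_of_eq_add_one hh.1 huv hvu
end
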